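/- For every finite acyclic quiver Q, the Hecke–Kiselman monoid HK(Q) is finite. -/

import Mathlib

/-- The defining relations of the Hecke–Kiselman monoid of a quiver with
vertex type `V` and arrow relation `arr`. -/
inductive HKRel {V : Type} (arr : V → V → Prop) : FreeMonoid V → FreeMonoid V → Prop
  | idem (t : V) :
      HKRel arr (FreeMonoid.of t * FreeMonoid.of t) (FreeMonoid.of t)
  | braid (s t : V) :
      HKRel arr (FreeMonoid.of s * FreeMonoid.of t * FreeMonoid.of s)
        (FreeMonoid.of t * FreeMonoid.of s * FreeMonoid.of t)
  | absorb (s t : V) : ¬ arr t s →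
      HKRel arr (FreeMonoid.of t * FreeMonoid.of s * FreeMonoid.of t)
        (FreeMonoid.of s * FreeMonoid.of t)

/-- The congruence on the free monoid generated by the Hecke–Kiselman relations. -/
def HKCon {V : Type} (arr : V → V → Prop) : Con (FreeMonoid V) := conGen (HKRel arr)

/-- The Hecke–Kiselman monoid of the quiver `(V, arr)`. -/
abbrev HK {V : Type} (arr : V → V → Prop) : Type := (HKCon arr).Quotient

/-- The generator of the Hecke–Kiselman monoid attached to the vertex `t`. -/
def HK.x {V : Type} (arr : V → V → Prop) (t : V) : HK arr :=
  (HKCon arr).mk' (FreeMonoid.of t)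

/-- The quiver `(V, arr)` is acyclic: the transitive closure of `arr` is irreflexive. -/
def IsAcyclicQuiver {V : Type} (arr : V → V → Prop) : Prop :=
  ∀ v : V, ¬ Relation.TransGen arr v v


/-! If `v` is a vertex of `S` with no arrow into `S`, the relations `x_v x_v = x_v` and
`x_v x_s x_v = x_s x_v` (for `s ∈ S`) propagate to `x_v m x_v = m x_v` for every `m` in the
submonoid `M_S` generated by `S`. Hence every element of `M_S` lies in `M_{S∖v}` or in
`M_{S∖v} x_v M_{S∖v}`, and `M_S` is finite by induction on `S`; acyclicity provides such a
vertex `v` in every nonempty `S`. -/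

namespace Submonoid

variable {M : Type*} [Monoid M] {s : Set M} {e : M}

theorem mul_mul_eq_mul_of_mem_closure (he : e * e = e) (hs : ∀ a ∈ s, e * a * e = a * e)
    {m : M} (hm : m ∈ closure s) : e * m * e = m * e := by
  induction hm using closure_induction_right with
  | one => simpa using he
  | mul_right m _ a ha ih =>
    calc e * (m * a) * e = e * m * (e * a * e) := by rw [hs a ha]; simp only [mul_assoc]
      _ = e * m * e * a * e := by simp only [mul_assoc]
      _ = m * (e * a * e) := by rw [ih]; simp only [mul_assoc]
      _ = m * a * e := by rw [hs a ha, mul_assoc]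

theorem coe_closure_insert_subset (he : e * e = e) (hs : ∀ a ∈ s, e * a * e = a * e) :
    (closure (insert e s) : Set M) ⊆
      closure s ∪ Set.image2 (fun a b => a * e * b) (closure s) (closure s) := by
  intro m hm
  induction hm using closure_induction_right with
  | one => exact Or.inl (one_mem _)
  | mul_right m _ a ha ih =>
    rcases ha with ha | ha
    · rw [ha]
      rcases ih with hm | ⟨b, hb, c, hc, rfl⟩
      · exact Or.inr ⟨m, hm, 1, one_mem _, mul_one _⟩
      · refine Or.inr ⟨b * c, mul_mem hb hc, 1, one_mem _, ?_⟩
        dsimp only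
        rw [mul_one, mul_assoc b e c, mul_assoc b (e * c) e, mul_mul_eq_mul_of_mem_closure he hs hc,
          mul_assoc]
    · rcases ih with hm | ⟨b, hb, c, hc, rfl⟩
      · exact Or.inl (mul_mem hm (subset_closure ha))
      · exact Or.inr ⟨b, hb, c * a, mul_mem hc (subset_closure ha), by simp only [mul_assoc]⟩

theorem finite_closure_insert (he : e * e = e) (hs : ∀ a ∈ s, e * a * e = a * e)
    (hfin : (closure s : Set M).Finite) : (closure (insert e s) : Set M).Finite :=
  (hfin.union (hfin.image2 _ hfin)).subset (coe_closure_insert_subset he hs)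

end Submonoid

theorem IsAcyclicQuiver.exists_forall_not_arr {V : Type} [Finite V] {arr : V → V → Prop}
    (hQ : IsAcyclicQuiver arr) {S : Set V} (hS : S.Nonempty) : ∃ v ∈ S, ∀ s ∈ S, ¬ arr v s := by
  let r : V → V → Prop := fun a b => Relation.TransGen arr b a
  have : Std.Irrefl r := ⟨hQ⟩
  have : IsTrans V r := ⟨fun _ _ _ h₁ h₂ => h₂.trans h₁⟩
  obtain ⟨v, hv, hmin⟩ := (Finite.wellFounded_of_trans_of_irrefl r).has_min S hS
  exact ⟨v, hv, fun s hs h => hmin s hs (.single h)⟩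

namespace HK

variable {V : Type} {arr : V → V → Prop}

theorem x_mul_x_self (t : V) : x arr t * x arr t = x arr t :=
  ((HKCon arr).eq).mpr (ConGen.Rel.of _ _ (HKRel.idem t))

theorem x_mul_x_mul_x_of_not_arr {s t : V} (h : ¬ arr t s) :
    x arr t * x arr s * x arr t = x arr s * x arr t :=
  ((HKCon arr).eq).mpr (ConGen.Rel.of _ _ (HKRel.absorb s t h))

theorem closure_range_x : Submonoid.closure (Set.range (x arr)) = ⊤ := by
  calc Submonoid.closure (Set.range (x arr))
      = (Submonoid.closure (Set.range FreeMonoid.of)).map (HKCon arr).mk' := by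
        rw [MonoidHom.map_mclosure, ← Set.range_comp]; rfl
    _ = ⊤ := by
        rw [FreeMonoid.closure_range_of, ← MonoidHom.mrange_eq_map, MonoidHom.mrange_eq_top]
        exact Con.mk'_surjective

theorem finite_closure_x_image [Finite V] (hQ : IsAcyclicQuiver arr) (S : Finset V) :
    (Submonoid.closure (x arr '' S) : Set (HK arr)).Finite := by
  classical
  induction S using Finset.strongInduction with
  | H S ih =>
    rcases S.eq_empty_or_nonempty with rfl | hS
    · simp
    obtain ⟨v, hv, hsink⟩ := hQ.exists_forall_not_arr (Finset.coe_nonempty.mpr hS)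
    have hSv : x arr '' S = insert (x arr v) (x arr '' (S.erase v)) := by
      rw [Finset.coe_erase, ← Set.image_insert_eq, Set.insert_sdiff_singleton,
        Set.insert_eq_of_mem hv]
    rw [hSv]
    refine Submonoid.finite_closure_insert (x_mul_x_self v) ?_ (ih _ (Finset.erase_ssubset hv))
    rintro _ ⟨s, hs, rfl⟩
    exact x_mul_x_mul_x_of_not_arr (hsink s (Finset.mem_of_mem_erase hs))

end HK

/-- For every finite acyclic quiver `Q`, the Hecke–Kiselman
monoid `HK(Q)` is finite. -/
theorem hk_finite (V : Type) [Fintype V] (arr : V → V → Prop)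
    (hQ : IsAcyclicQuiver arr) : Finite (HK arr) := by
  have h := HK.finite_closure_x_image hQ Finset.univ
  rw [Finset.coe_univ, Set.image_univ, HK.closure_range_x, Submonoid.coe_top] at h
  exact Set.finite_univ_iff.mp h
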